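/- The mechanism Hist_med is ε-differentially private: for every pair of neighboring databases D ≈ D' (finite multisets of real numbers differing by insertion or deletion of a single element) and every output o ∈ {0, 1}, Pr[Hist_med(D) = o] ≤ e^{ε} · Pr[Hist_med(D') = o]. -/

import Mathlib

open MeasureTheory Real
open scoped Classical

/-- `Lap b` : the Laplace distribution on `ℝ` with density
`x ↦ (1/(2b)) * exp (-|x|/b)` with respect to Lebesgue measure. -/
noncomputable def laplace (b : ℝ) : Measure ℝ :=
  volume.withDensity (fun x => ENNReal.ofReal ((1 / (2 * b)) * Real.exp (-|x| / b)))

/-- The output of `Hist_med` on database `D` (a finite multiset of reals) with noise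
`ω = (ρ, ν₁, ν₂)`: with `ñ = |D| + ρ`, `c₁ = #{v ∈ D : v ≤ a} + ν₁` and
`c₂ = #{v ∈ D : v ≥ b} + ν₂`, output `0` (`false`, "distance bound unmet") if
`c₁ ≥ ⌈ñ/2⌉` or `c₂ ≥ ⌈ñ/2⌉`, and `1` (`true`) otherwise. -/
noncomputable def histMedOut (a b : ℝ) (D : Multiset ℝ) (ω : ℝ × ℝ × ℝ) : Bool :=
  let n : ℝ := (Multiset.card D : ℝ) + ω.1
  let c₁ : ℝ := ((Multiset.card (D.filter (fun v => v ≤ a)) : ℕ) : ℝ) + ω.2.1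
  let c₂ : ℝ := ((Multiset.card (D.filter (fun v => b ≤ v)) : ℕ) : ℝ) + ω.2.2
  if ((⌈n / 2⌉ : ℤ) : ℝ) ≤ c₁ ∨ ((⌈n / 2⌉ : ℤ) : ℝ) ≤ c₂ then false else true

/-- The joint distribution of the three independent `Lap(2/ε)` noise samples
`(ρ, ν₁, ν₂)` used by `Hist_med`. -/
noncomputable def histMedNoise (ε : ℝ) : Measure (ℝ × ℝ × ℝ) :=
  (laplace (2 / ε)).prod ((laplace (2 / ε)).prod (laplace (2 / ε)))

/-!
The output on `D` is a fixed function of `q(D) + ω`, where `q(D) = (|D|, #{v ≤ a}, #{v ≥ b})`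
and `ω` is the noise. Adding an element to `D` moves `q(D)` by `1` in the first coordinate and,
since `a < b`, by at most `1` in the other two together, so by at most `2` in `ℓ¹`. The noise has
the product Laplace density of scale `2/ε`, which changes by a factor at most `exp (ε ‖t‖₁ / 2)`
under a shift by `t`; as Lebesgue measure is translation invariant, the probability of any event
changes by a factor at most `e^ε` when the event is shifted by `t`.
-/

open scoped ENNReal

theorem MeasureTheory.Measure.withDensity_apply_le_mul_preimage_add {G : Type*}
    [MeasurableSpace G] [AddGroup G] [MeasurableAdd G] (μ : Measure G) [μ.IsAddRightInvariant]
    {f : G → ℝ≥0∞} (hf : Measurable f) {t : G} {c : ℝ≥0∞} (hc : ∀ x, f (x + t) ≤ c * f x)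
    {s : Set G} (hs : MeasurableSet s) :
    μ.withDensity f s ≤ c * μ.withDensity f ((· + t) ⁻¹' s) := by
  rw [withDensity_apply _ hs, withDensity_apply _ (measurable_add_const t hs),
    ← (measurePreserving_add_right μ t).setLIntegral_comp_preimage hs hf,
    ← lintegral_const_mul c hf]
  exact setLIntegral_mono (hf.const_mul c) fun x _ => hc x

noncomputable def laplaceDensity (b : ℝ) (x : ℝ) : ℝ≥0∞ :=
  ENNReal.ofReal ((1 / (2 * b)) * Real.exp (-|x| / b))

@[fun_prop]
theorem measurable_laplaceDensity (b : ℝ) : Measurable (laplaceDensity b) := by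
  unfold laplaceDensity
  fun_prop

theorem laplaceDensity_add_le {b : ℝ} (hb : 0 ≤ b) (x t : ℝ) :
    laplaceDensity b (x + t) ≤ ENNReal.ofReal (Real.exp (|t| / b)) * laplaceDensity b x := by
  rw [laplaceDensity, laplaceDensity, ← ENNReal.ofReal_mul (by positivity), mul_left_comm,
    ← Real.exp_add]
  gcongr
  have : |x| ≤ |x + t| + |t| := by simpa using abs_sub (x + t) t
  rw [← add_div]
  gcongr
  linarith

noncomputable def noiseDensity (b : ℝ) (ω : ℝ × ℝ × ℝ) : ℝ≥0∞ :=
  laplaceDensity b ω.1 * (laplaceDensity b ω.2.1 * laplaceDensity b ω.2.2)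

theorem histMedNoise_eq_withDensity (ε : ℝ) :
    histMedNoise ε = (volume.prod (volume.prod volume)).withDensity (noiseDensity (2 / ε)) := by
  rw [histMedNoise, laplace, prod_withDensity (by fun_prop) (by fun_prop),
    prod_withDensity (by fun_prop) (by fun_prop)]
  rfl

theorem noiseDensity_add_le {b : ℝ} (hb : 0 ≤ b) (ω t : ℝ × ℝ × ℝ) :
    noiseDensity b (ω + t) ≤
      ENNReal.ofReal (Real.exp ((|t.1| + |t.2.1| + |t.2.2|) / b)) * noiseDensity b ω := by
  calc noiseDensity b (ω + t)
      ≤ ENNReal.ofReal (Real.exp (|t.1| / b)) * laplaceDensity b ω.1 *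
          (ENNReal.ofReal (Real.exp (|t.2.1| / b)) * laplaceDensity b ω.2.1 *
            (ENNReal.ofReal (Real.exp (|t.2.2| / b)) * laplaceDensity b ω.2.2)) := by
        unfold noiseDensity
        gcongr <;> exact laplaceDensity_add_le hb _ _
    _ = ENNReal.ofReal (Real.exp ((|t.1| + |t.2.1| + |t.2.2|) / b)) * noiseDensity b ω := by
        rw [add_div, add_div, Real.exp_add, Real.exp_add, ENNReal.ofReal_mul (by positivity),
          ENNReal.ofReal_mul (by positivity), noiseDensity]
        ring

theorem histMedNoise_le_exp_mul_preimage_add {ε : ℝ} (hε : 0 < ε) {t : ℝ × ℝ × ℝ}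
    (ht : |t.1| + |t.2.1| + |t.2.2| ≤ 2) {s : Set (ℝ × ℝ × ℝ)} (hs : MeasurableSet s) :
    histMedNoise ε s ≤ ENNReal.ofReal (Real.exp ε) * histMedNoise ε ((· + t) ⁻¹' s) := by
  have := Measure.prod.instIsAddRightInvariant (μ := (volume : Measure ℝ))
    (ν := (volume : Measure ℝ).prod (volume : Measure ℝ))
  rw [histMedNoise_eq_withDensity]
  refine (Measure.withDensity_apply_le_mul_preimage_add _ (by unfold noiseDensity; fun_prop)
    (noiseDensity_add_le (by positivity) · t) hs).trans ?_
  gcongr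
  rw [div_div_eq_mul_div, div_le_iff₀ two_pos]
  nlinarith

noncomputable def histMedQuery (a b : ℝ) (D : Multiset ℝ) : ℝ × ℝ × ℝ :=
  (Multiset.card D, Multiset.card (D.filter (· ≤ a)), Multiset.card (D.filter (b ≤ ·)))

theorem histMedOut_eq_zero_add (a b : ℝ) (D : Multiset ℝ) (ω : ℝ × ℝ × ℝ) :
    histMedOut a b D ω = histMedOut a b 0 (histMedQuery a b D + ω) := by
  simp [histMedOut, histMedQuery]

theorem exists_histMedQuery_cons {a b : ℝ} (hab : a < b) (v : ℝ) (D : Multiset ℝ) :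
    ∃ t : ℝ × ℝ × ℝ, histMedQuery a b (v ::ₘ D) = histMedQuery a b D + t ∧
      |t.1| + |t.2.1| + |t.2.2| ≤ 2 := by
  refine ⟨(1, if v ≤ a then 1 else 0, if b ≤ v then 1 else 0), ?_, ?_⟩
  · simp only [histMedQuery, Multiset.card_cons, Multiset.filter_cons]
    split_ifs <;> simp
  · split_ifs with hva hbv
    · exact absurd (hbv.trans hva) hab.not_ge
    all_goals norm_num

theorem setOf_histMedOut_eq_preimage_add {a b : ℝ} {D D' : Multiset ℝ} {t : ℝ × ℝ × ℝ}
    (h : histMedQuery a b D' = histMedQuery a b D + t) (o : Bool) :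
    {ω | histMedOut a b D' ω = o} = (· + t) ⁻¹' {ω | histMedOut a b D ω = o} := by
  ext ω
  simp only [Set.mem_ofPred_eq, Set.mem_preimage, histMedOut_eq_zero_add a b D', h,
    histMedOut_eq_zero_add a b D, add_assoc, add_comm t]

theorem measurable_histMedOut (a b : ℝ) (D : Multiset ℝ) : Measurable (histMedOut a b D) := by
  unfold histMedOut
  refine Measurable.ite ?_ measurable_const measurable_const
  have hceil : Measurable fun ω : ℝ × ℝ × ℝ => ((⌈(Multiset.card D + ω.1) / 2⌉ : ℤ) : ℝ) := by
    fun_prop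
  exact (measurableSet_le hceil (by fun_prop)).union (measurableSet_le hceil (by fun_prop))

/-- `Hist_med` is `ε`-differentially private: for every pair of neighboring databases
`D ≈ D'` (finite multisets of reals differing by insertion or deletion of one
element) and every output `o ∈ {0, 1}`,
`Pr[Hist_med(D) = o] ≤ e^ε · Pr[Hist_med(D') = o]`. -/
theorem histmed_is_DP (ε a b : ℝ) (hε : 0 < ε) (hab : a < b)
    (D D' : Multiset ℝ)
    (hnb : ∃ v : ℝ, D' = v ::ₘ D ∨ D = v ::ₘ D') :
    ∀ o : Bool,
      histMedNoise ε {ω | histMedOut a b D ω = o} ≤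
        ENNReal.ofReal (Real.exp ε) * histMedNoise ε {ω | histMedOut a b D' ω = o} := by
  intro o
  obtain ⟨v, rfl | rfl⟩ := hnb
  · obtain ⟨t, hq, ht⟩ := exists_histMedQuery_cons hab v D
    rw [setOf_histMedOut_eq_preimage_add hq]
    exact histMedNoise_le_exp_mul_preimage_add hε ht (measurable_histMedOut a b D (.singleton o))
  · obtain ⟨t, hq, ht⟩ := exists_histMedQuery_cons hab v D'
    rw [setOf_histMedOut_eq_preimage_add hq]
    have hs := measurable_add_const t (measurable_histMedOut a b D' (.singleton o))
    calc histMedNoise ε ((· + t) ⁻¹' {ω | histMedOut a b D' ω = o})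
        ≤ ENNReal.ofReal (Real.exp ε) * histMedNoise ε ((· + -t) ⁻¹' ((· + t) ⁻¹' _)) :=
          histMedNoise_le_exp_mul_preimage_add hε (by simpa using ht) hs
      _ = _ := by simp only [Set.preimage_preimage, neg_add_cancel_right, Set.preimage_id']
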